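/- Let γ = [0; b_1, b_2, ...] be irrational but not a quadratic irrationality, with partial quotients in {1,2,3,4}. Let n_1 < n_2 be indices with n_1 ≡ n_2 (mod 2) and b_{n_1+i} = b_{n_2+i} for 0 ≤ i ≤ 2n+1. Define γ¹ = [0; b_1,...,b_{n_1−1}, b_{n_2}, b_{n_2+1}, ...] (deleting the block b_{n_1},...,b_{n_2−1}) and γ² = [0; b_1,...,b_{n_2−1}, b_{n_1},...,b_{n_2−1}, b_{n_2}, ...] (doubling that block). Then max(γ¹, γ²) > γ. -/

import Mathlib

open Filter

/-- Numerators of the convergents of the continued fraction `[a 0; a 1, a 2, ...]`. -/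
def cfNum (a : ℕ → ℤ) : ℕ → ℤ
  | 0 => a 0
  | 1 => a 1 * a 0 + 1
  | n + 2 => a (n + 2) * cfNum a (n + 1) + cfNum a n

/-- Denominators of the convergents of the continued fraction `[a 0; a 1, a 2, ...]`. -/
def cfDen (a : ℕ → ℤ) : ℕ → ℤ
  | 0 => 1
  | 1 => a 1
  | n + 2 => a (n + 2) * cfDen a (n + 1) + cfDen a n

/-- Value of the infinite continued fraction `[a 0; a 1, a 2, ...]`, as the limit of
its convergents. -/
noncomputable def cfVal (a : ℕ → ℤ) : ℝ :=
  limUnder atTop fun n => (cfNum a n : ℝ) / (cfDen a n : ℝ)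

/-- Value of the infinite continued fraction `[0; s 0, s 1, s 2, ...]`. -/
noncomputable def cfZero (s : ℕ → ℤ) : ℝ :=
  cfVal fun n => if n = 0 then 0 else s (n - 1)

/-- Value of the finite continued fraction `[0; l]`. -/
noncomputable def cfFin : List ℤ → ℝ
  | [] => 0
  | x :: xs => 1 / ((x : ℝ) + cfFin xs)

/-- `λ_i(α) = [a_i; a_{i+1}, ...] + [0; a_{i-1}, ..., a_1]` for `α = [a 0; a 1, a 2, ...]`. -/
noncomputable def lambdaCF (a : ℕ → ℤ) (i : ℕ) : ℝ :=
  cfVal (fun n => a (i + n)) + cfFin ((List.range (i - 1)).map fun j => a (i - 1 - j))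

/-- `λ_i(B) = [b_i; b_{i-1}, ...] + [0; b_{i+1}, ...]` for a doubly infinite sequence. -/
noncomputable def lambdaZ (b : ℤ → ℤ) (i : ℤ) : ℝ :=
  cfVal (fun n => b (i - n)) + cfVal fun n => if n = 0 then 0 else b (i + n)

/-- `M(B) = sup_i λ_i(B)`. -/
noncomputable def MZ (b : ℤ → ℤ) : ℝ := ⨆ i : ℤ, lambdaZ b i

/-- The Lagrange constant `μ(α)`, defined by
`μ(α)⁻¹ = liminf_{p ∈ ℤ, q ∈ ℕ} |q (q α - p)|`. -/
noncomputable def lagrangeConst (α : ℝ) : ℝ :=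
  (liminf (fun q : ℕ => ⨅ p : ℤ, |(q : ℝ) * ((q : ℝ) * α - (p : ℝ))|) atTop)⁻¹

/-- `α` is attainable: `|α - p/q| ≤ 1/(μ(α) q²)` has infinitely many integer solutions. -/
def Attainable (α : ℝ) : Prop :=
  {pq : ℤ × ℤ | 0 < pq.2 ∧
    |α - (pq.1 : ℝ) / (pq.2 : ℝ)| ≤ 1 / (lagrangeConst α * (pq.2 : ℝ) ^ 2)}.Infinite

/-- The Lagrange spectrum: the set of values of `μ(α)` over irrational `α`. -/
def LagrangeSpectrum : Set ℝ := {x | ∃ α : ℝ, Irrational α ∧ lagrangeConst α = x}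

/-- The doubly infinite sequence `b` is weakly associated with the number whose partial
quotients are `a 1, a 2, ...`: every central pattern `(b_{-i}, ..., b_i)` occurs
infinitely often in `(a 1, a 2, ...)`. -/
def WeaklyAssoc (b : ℤ → ℤ) (a : ℕ → ℤ) : Prop :=
  ∀ i : ℕ, ∃ᶠ k in atTop, ∀ j : ℕ, j ≤ 2 * i → a (k + 1 + j) = b ((j : ℤ) - (i : ℤ))

/-!
Write `γₘ = [b_m; b_{m+1}, ...]` for the complete quotients of `γ`. Then `γ¹` is `γ` with the
tail `γ_{n₁}` replaced by `γ_{n₂}`, and `γ²` is `γ` with the tail `γ_{n₂}` replaced by `γ_{n₁}`.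
Since `x ↦ [b_0; b_1, ..., b_{m-1}, x]` is increasing for even `m` and decreasing for odd `m`,
and `n₁ ≡ n₂ (mod 2)`, one of the two substitutions increases `γ` as soon as `γ_{n₁} ≠ γ_{n₂}`.
Equality is impossible: the block `b_{n₁}, ..., b_{n₂-1}` would make `γ_{n₁}` a fixed point of
a unimodular Möbius map with nonzero lower-left entry, so `γ_{n₁}`, and with it `γ`, would be a
quadratic irrationality.
-/

open Topology

section ContinuedFraction

variable {s : ℕ → ℤ}

theorem one_le_cfDen (hs : ∀ k, 1 ≤ k → 1 ≤ s k) (n : ℕ) : 1 ≤ cfDen s n := by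
  induction n using Nat.strong_induction_on with
  | _ n ih =>
    match n, ih with
    | 0, _ => simp [cfDen]
    | 1, _ => simpa [cfDen] using hs 1 le_rfl
    | n + 2, ih =>
      rw [cfDen]
      nlinarith [hs (n + 2) (by omega), ih n (by omega), ih (n + 1) (by omega)]

theorem le_cfDen (hs : ∀ k, 1 ≤ k → 1 ≤ s k) (n : ℕ) : (n : ℤ) ≤ cfDen s n := by
  induction n using Nat.strong_induction_on with
  | _ n ih =>
    match n, ih with
    | 0, _ => simp [cfDen]
    | 1, _ => simpa [cfDen] using hs 1 le_rfl
    | n + 2, ih =>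
      have hq : ((n + 1 : ℕ) : ℤ) ≤ cfDen s (n + 1) := ih (n + 1) (by omega)
      push_cast at hq ⊢
      rw [cfDen]
      nlinarith [hs (n + 2) (by omega), one_le_cfDen hs n]

theorem cfDen_le_cfNum (hs : ∀ k, 1 ≤ k → 1 ≤ s k) (h0 : 1 ≤ s 0) (n : ℕ) :
    cfDen s n ≤ cfNum s n := by
  induction n using Nat.strong_induction_on with
  | _ n ih =>
    match n, ih with
    | 0, _ => simpa [cfNum, cfDen] using h0
    | 1, _ => simp only [cfNum, cfDen]; nlinarith [hs 1 le_rfl]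
    | n + 2, ih =>
      rw [cfDen, cfNum]
      nlinarith [hs (n + 2) (by omega), ih n (by omega), ih (n + 1) (by omega)]

theorem cfNum_succ_mul_cfDen_sub (n : ℕ) :
    cfNum s (n + 1) * cfDen s n - cfNum s n * cfDen s (n + 1) = (-1) ^ n := by
  induction n with
  | zero => simp only [cfNum, cfDen]; ring
  | succ n ih =>
    rw [cfNum, cfDen]
    linear_combination -ih

noncomputable def convergent (s : ℕ → ℤ) (n : ℕ) : ℝ := cfNum s n / cfDen s n

theorem cfDen_pos (hs : ∀ k, 1 ≤ k → 1 ≤ s k) (n : ℕ) : (0 : ℝ) < cfDen s n := by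
  exact_mod_cast one_le_cfDen hs n

theorem convergent_succ_sub (hs : ∀ k, 1 ≤ k → 1 ≤ s k) (n : ℕ) :
    convergent s (n + 1) - convergent s n = (-1) ^ n / (cfDen s n * cfDen s (n + 1)) := by
  have hq := (cfDen_pos hs n).ne'
  have hq' := (cfDen_pos hs (n + 1)).ne'
  have hdet : (cfNum s (n + 1) * cfDen s n - cfNum s n * cfDen s (n + 1) : ℝ) = (-1) ^ n := by
    exact_mod_cast cfNum_succ_mul_cfDen_sub n
  rw [convergent, convergent, div_sub_div _ _ hq' hq, ← hdet]
  ring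

theorem summable_convergent_succ_sub (hs : ∀ k, 1 ≤ k → 1 ≤ s k) :
    Summable fun n => convergent s (n + 1) - convergent s n := by
  have hbound : Summable fun n : ℕ => 2 / ((n : ℝ) + 1) ^ 2 := by
    have := (summable_nat_add_iff 1).mpr (Real.summable_one_div_nat_pow.mpr one_lt_two)
    exact (this.mul_left 2).congr fun n => by push_cast; ring
  refine Summable.of_norm_bounded hbound fun n => ?_
  have hq : (1 : ℝ) ≤ cfDen s n := by exact_mod_cast one_le_cfDen hs n
  have hnq : (n : ℝ) ≤ cfDen s n := by exact_mod_cast le_cfDen hs n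
  have hnq' : (n + 1 : ℝ) ≤ cfDen s (n + 1) := by exact_mod_cast le_cfDen hs (n + 1)
  rw [convergent_succ_sub hs, Real.norm_eq_abs, abs_div, abs_pow, abs_neg, abs_one, one_pow,
    abs_of_pos (mul_pos (cfDen_pos hs n) (cfDen_pos hs (n + 1))),
    div_le_div_iff₀ (mul_pos (cfDen_pos hs n) (cfDen_pos hs (n + 1))) (by positivity)]
  nlinarith

theorem tendsto_convergent (hs : ∀ k, 1 ≤ k → 1 ≤ s k) :
    Tendsto (convergent s) atTop (𝓝 (cfVal s)) := by
  obtain ⟨S, hS⟩ := summable_convergent_succ_sub hs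
  have hpartial : ∀ n, convergent s 0 + ∑ i ∈ Finset.range n,
      (convergent s (i + 1) - convergent s i) = convergent s n := by
    intro n
    rw [Finset.sum_range_sub]
    ring
  have hlim := (hS.tendsto_sum_nat.const_add (convergent s 0)).congr hpartial
  have hval : cfVal s = convergent s 0 + S := hlim.limUnder_eq
  rwa [hval]

theorem one_le_cfVal (hs : ∀ k, 1 ≤ k → 1 ≤ s k) (h0 : 1 ≤ s 0) : 1 ≤ cfVal s := by
  refine ge_of_tendsto (tendsto_convergent hs) (Eventually.of_forall fun n => ?_)
  have hle : (cfDen s n : ℝ) ≤ cfNum s n := by exact_mod_cast cfDen_le_cfNum hs h0 n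
  rw [convergent, one_le_div (cfDen_pos hs n)]
  exact hle

theorem cfDen_succ (n : ℕ) : cfDen s (n + 1) = cfNum (fun k => s (k + 1)) n := by
  induction n using Nat.strong_induction_on with
  | _ n ih =>
    match n, ih with
    | 0, _ => simp [cfNum, cfDen]
    | 1, _ => simp [cfNum, cfDen]
    | n + 2, ih => rw [cfDen, cfNum, ih n (by omega), ih (n + 1) (by omega)]

theorem cfNum_succ (n : ℕ) :
    cfNum s (n + 1) = s 0 * cfNum (fun k => s (k + 1)) n + cfDen (fun k => s (k + 1)) n := by
  induction n using Nat.strong_induction_on with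
  | _ n ih =>
    match n, ih with
    | 0, _ => simp only [cfNum, cfDen]; ring
    | 1, _ => simp only [cfNum, cfDen]; ring
    | n + 2, ih =>
      show s (n + 3) * cfNum s (n + 1 + 1) + cfNum s (n + 1) =
        s 0 * (s (n + 3) * cfNum (fun k => s (k + 1)) (n + 1) + cfNum (fun k => s (k + 1)) n) +
          (s (n + 3) * cfDen (fun k => s (k + 1)) (n + 1) + cfDen (fun k => s (k + 1)) n)
      rw [ih n (by omega), ih (n + 1) (by omega)]
      ring

theorem convergent_succ (hs : ∀ k, 1 ≤ k → 1 ≤ s k) (n : ℕ) :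
    convergent s (n + 1) = s 0 + (convergent (fun k => s (k + 1)) n)⁻¹ := by
  have hs' : ∀ k, 1 ≤ k → 1 ≤ s (k + 1) := fun k _ => hs (k + 1) (by omega)
  have hp : (0 : ℝ) < cfNum (fun k => s (k + 1)) n := by
    exact_mod_cast (one_le_cfDen hs' n).trans (cfDen_le_cfNum hs' (hs 1 le_rfl) n)
  have hq := cfDen_pos hs' n
  rw [convergent, convergent, cfNum_succ, cfDen_succ, inv_div]
  push_cast
  field_simp

theorem cfVal_eq_add_inv (hs : ∀ k, 1 ≤ k → 1 ≤ s k) :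
    cfVal s = s 0 + (cfVal fun k => s (k + 1))⁻¹ := by
  have hs' : ∀ k, 1 ≤ k → 1 ≤ s (k + 1) := fun k _ => hs (k + 1) (by omega)
  have hpos : (0 : ℝ) < cfVal fun k => s (k + 1) :=
    one_pos.trans_le (one_le_cfVal hs' (hs 1 le_rfl))
  refine tendsto_nhds_unique ((tendsto_convergent hs).comp (tendsto_add_atTop_nat 1)) ?_
  refine (((tendsto_convergent hs').inv₀ hpos.ne').const_add (s 0 : ℝ)).congr fun n => ?_
  exact (convergent_succ hs n).symm

noncomputable def completeQuotient (s : ℕ → ℤ) (m : ℕ) : ℝ := cfVal fun k => s (m + k)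

theorem completeQuotient_zero : completeQuotient s 0 = cfVal s := by
  simp [completeQuotient]

theorem completeQuotient_eq_add_inv (hs : ∀ k, 1 ≤ k → 1 ≤ s k) (m : ℕ) :
    completeQuotient s m = s m + (completeQuotient s (m + 1))⁻¹ := by
  have h := cfVal_eq_add_inv (s := fun k => s (m + k)) fun k hk => hs (m + k) (by omega)
  simpa only [completeQuotient, add_zero, add_assoc, add_comm 1] using h

theorem one_le_completeQuotient (hs : ∀ k, 1 ≤ k → 1 ≤ s k) {m : ℕ} (hm : 1 ≤ m) :
    1 ≤ completeQuotient s m :=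
  one_le_cfVal (fun k _ => hs (m + k) (by omega)) (by simpa using hs m hm)

theorem completeQuotient_shift (m₁ m₂ : ℕ) :
    completeQuotient (fun k => s (m₁ + k)) m₂ = completeQuotient s (m₁ + m₂) := by
  simp only [completeQuotient, add_assoc]

theorem completeQuotient_lt_of_succ_lt {u v : ℕ → ℤ} (hu : ∀ k, 1 ≤ k → 1 ≤ u k)
    (hv : ∀ k, 1 ≤ k → 1 ≤ v k) {j : ℕ} (hj : u j = v j)
    (hlt : completeQuotient u (j + 1) < completeQuotient v (j + 1)) :
    completeQuotient v j < completeQuotient u j := by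
  rw [completeQuotient_eq_add_inv hu, completeQuotient_eq_add_inv hv, hj, add_lt_add_iff_left]
  exact inv_strictAntiOn (one_pos.trans_le (one_le_completeQuotient hu (by omega)))
    (one_pos.trans_le (one_le_completeQuotient hv (by omega))) hlt

theorem cfVal_lt_cfVal_of_completeQuotient_lt {u v : ℕ → ℤ} (hu : ∀ k, 1 ≤ k → 1 ≤ u k)
    (hv : ∀ k, 1 ≤ k → 1 ≤ v k) {m : ℕ} (hagree : ∀ k < m, u k = v k)
    (hlt : completeQuotient u m < completeQuotient v m) :
    (Even m → cfVal u < cfVal v) ∧ (Odd m → cfVal v < cfVal u) := by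
  suffices h : ∀ i ≤ m, (Even i → completeQuotient u (m - i) < completeQuotient v (m - i)) ∧
      (Odd i → completeQuotient v (m - i) < completeQuotient u (m - i)) by
    simpa only [Nat.sub_self, completeQuotient_zero] using h m le_rfl
  intro i hi
  induction i with
  | zero => exact ⟨fun _ => hlt, fun h => absurd h Nat.not_odd_zero⟩
  | succ i ih =>
    have hj : m - i = m - (i + 1) + 1 := by omega
    obtain ⟨ihe, iho⟩ := ih (by omega)
    rw [hj] at ihe iho
    have hag := hagree (m - (i + 1)) (by omega)
    refine ⟨fun he => ?_, fun ho => ?_⟩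
    · exact completeQuotient_lt_of_succ_lt hv hu hag.symm
        (iho (Nat.not_even_iff_odd.mp (Nat.even_add_one.mp he)))
    · exact completeQuotient_lt_of_succ_lt hu hv hag
        (ihe (Nat.not_odd_iff_even.mp (Nat.odd_add_one.mp ho)))

theorem exists_cfVal_mul_completeQuotient (hs : ∀ k, 1 ≤ k → 1 ≤ s k) (m : ℕ) :
    ∃ P P' Q Q' : ℤ, P * Q' - P' * Q = (-1) ^ m ∧ (0 < m → 1 ≤ Q) ∧
      cfVal s * (Q * completeQuotient s m + Q') = P * completeQuotient s m + P' := by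
  suffices h : ∃ P P' Q Q' : ℤ, P * Q' - P' * Q = (-1) ^ m ∧ (m = 0 → Q = 0 ∧ Q' = 1) ∧
      (0 < m → 1 ≤ Q ∧ 0 ≤ Q') ∧
      cfVal s * (Q * completeQuotient s m + Q') = P * completeQuotient s m + P' by
    obtain ⟨P, P', Q, Q', hdet, -, hQ, heq⟩ := h
    exact ⟨P, P', Q, Q', hdet, fun hm => (hQ hm).1, heq⟩
  induction m with
  | zero => exact ⟨1, 0, 0, 1, by norm_num, fun _ => ⟨rfl, rfl⟩, by omega,
      by simp [completeQuotient_zero]⟩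
  | succ m ih =>
    obtain ⟨P, P', Q, Q', hdet, hQ₀, hQ, heq⟩ := ih
    have hT' : 0 < completeQuotient s (m + 1) :=
      one_pos.trans_le (one_le_completeQuotient hs (by omega))
    have hTT' : completeQuotient s m * completeQuotient s (m + 1) =
        s m * completeQuotient s (m + 1) + 1 := by
      rw [completeQuotient_eq_add_inv hs m]
      field_simp
    have hQ' : 1 ≤ Q * s m + Q' ∧ 0 ≤ Q := by
      rcases Nat.eq_zero_or_pos m with rfl | hm
      · obtain ⟨rfl, rfl⟩ := hQ₀ rfl
        simp
      · obtain ⟨hQ1, hQ'0⟩ := hQ hm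
        constructor <;> nlinarith [hs m hm]
    refine ⟨P * s m + P', P, Q * s m + Q', Q, ?_, by omega, fun _ => hQ', ?_⟩
    · rw [pow_succ, ← hdet]
      ring
    · push_cast
      linear_combination completeQuotient s (m + 1) * heq + (P - cfVal s * Q) * hTT'

theorem exists_quadratic_of_mul_eq {x t : ℝ} {P P' Q Q' A B C : ℤ}
    (hdet : P * Q' - P' * Q ≠ 0) (hx : x * (Q * t + Q') = P * t + P')
    (hA : A ≠ 0) (ht : A * t ^ 2 + B * t + C = 0) :
    ∃ A' B' C' : ℤ, ¬(A' = 0 ∧ B' = 0 ∧ C' = 0) ∧ A' * x ^ 2 + B' * x + C' = 0 := by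
  /- Expand `A u² + B u v + C v²` at `u = P' - Q' x`, `v = Q x - P`; it vanishes because
  `u = t v`, and its homogenisation evaluated at `x = P / Q` is `A (P Q' - P' Q)² ≠ 0`. -/
  refine ⟨A * Q' ^ 2 - B * Q' * Q + C * Q ^ 2,
    -2 * A * P' * Q' + B * (P' * Q + Q' * P) - 2 * C * Q * P,
    A * P' ^ 2 - B * P' * P + C * P ^ 2, ?_, ?_⟩
  · rintro ⟨h₂, h₁, h₀⟩
    have h : A * (P * Q' - P' * Q) ^ 2 = 0 := by
      linear_combination P ^ 2 * h₂ + P * Q * h₁ + Q ^ 2 * h₀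
    exact pow_ne_zero 2 hdet ((mul_eq_zero.mp h).resolve_left hA)
  · push_cast
    linear_combination (Q * x - P) ^ 2 * ht
      - (A * (P' - Q' * x + t * (Q * x - P)) + B * (Q * x - P)) * hx

theorem exists_quadratic_of_completeQuotient_eq (hs : ∀ k, 1 ≤ k → 1 ≤ s k) {m₁ m₂ : ℕ}
    (hlt : m₁ < m₂) (heq : completeQuotient s m₁ = completeQuotient s m₂) :
    ∃ A B C : ℤ, ¬(A = 0 ∧ B = 0 ∧ C = 0) ∧ A * cfVal s ^ 2 + B * cfVal s + C = 0 := by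
  obtain ⟨P₀, P₀', Q₀, Q₀', hdet, -, hγ⟩ := exists_cfVal_mul_completeQuotient hs m₁
  obtain ⟨P, P', Q, Q', -, hQ, ht⟩ := exists_cfVal_mul_completeQuotient
    (s := fun k => s (m₁ + k)) (fun k _ => hs (m₁ + k) (by omega)) (m₂ - m₁)
  change completeQuotient s m₁ * _ = _ at ht
  rw [completeQuotient_shift, Nat.add_sub_cancel' hlt.le, ← heq] at ht
  refine exists_quadratic_of_mul_eq (A := Q) (B := Q' - P) (C := -P')
    (by rw [hdet]; exact pow_ne_zero _ (by norm_num)) hγ (by omega) ?_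
  push_cast
  linear_combination ht

theorem cfVal_lt_or_cfVal_lt_of_completeQuotient_ne {a u v : ℕ → ℤ}
    (ha : ∀ k, 1 ≤ k → 1 ≤ a k) (hu : ∀ k, 1 ≤ k → 1 ≤ u k) (hv : ∀ k, 1 ≤ k → 1 ≤ v k)
    {m₁ m₂ : ℕ} (hpar : m₁ % 2 = m₂ % 2) (hu_agree : ∀ k < m₁, a k = u k)
    (hv_agree : ∀ k < m₂, a k = v k) (hu_tail : completeQuotient u m₁ = completeQuotient a m₂)
    (hv_tail : completeQuotient v m₂ = completeQuotient a m₁)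
    (hne : completeQuotient a m₁ ≠ completeQuotient a m₂) :
    cfVal a < cfVal u ∨ cfVal a < cfVal v := by
  have hodd : Odd m₁ ↔ Odd m₂ := by simp only [Nat.odd_iff, hpar]
  rcases hne.lt_or_gt with hlt | hgt
  · rcases Nat.even_or_odd m₁ with he | ho
    · exact Or.inl ((cfVal_lt_cfVal_of_completeQuotient_lt ha hu hu_agree
        (hu_tail ▸ hlt)).1 he)
    · exact Or.inr ((cfVal_lt_cfVal_of_completeQuotient_lt hv ha
        (fun k hk => (hv_agree k hk).symm) (hv_tail ▸ hlt)).2 (hodd.mp ho))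
  · rcases Nat.even_or_odd m₂ with he | ho
    · exact Or.inr ((cfVal_lt_cfVal_of_completeQuotient_lt ha hv hv_agree
        (hv_tail ▸ hgt)).1 he)
    · exact Or.inl ((cfVal_lt_cfVal_of_completeQuotient_lt hu ha
        (fun k hk => (hu_agree k hk).symm) (hu_tail ▸ hgt)).2 (hodd.mpr ho))

end ContinuedFraction

theorem stmt14_general (a : ℕ → ℤ)
    (ha : ∀ k, 1 ≤ k → 1 ≤ a k ∧ a k ≤ 4)
    (hquad : ∀ qa qb qc : ℚ,
      (qa : ℝ) * (cfVal a) ^ 2 + (qb : ℝ) * cfVal a + (qc : ℝ) = 0 →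
        qa = 0 ∧ qb = 0 ∧ qc = 0)
    (n₁ n₂ : ℕ) (h₁ : 1 ≤ n₁) (h₁₂ : n₁ < n₂) (hpar : n₁ % 2 = n₂ % 2) :
    max (cfVal fun k => if k < n₁ then a k else a (k + (n₂ - n₁)))
        (cfVal fun k => if k < n₂ then a k else a (k - (n₂ - n₁)))
      > cfVal a := by
  set u : ℕ → ℤ := fun k => if k < n₁ then a k else a (k + (n₂ - n₁))
  set v : ℕ → ℤ := fun k => if k < n₂ then a k else a (k - (n₂ - n₁))
  have ha' : ∀ k, 1 ≤ k → 1 ≤ a k := fun k hk => (ha k hk).1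
  have hu : ∀ k, 1 ≤ k → 1 ≤ u k := fun k hk => by
    simp only [u]; split_ifs <;> apply ha' <;> omega
  have hv : ∀ k, 1 ≤ k → 1 ≤ v k := fun k hk => by
    simp only [v]; split_ifs <;> apply ha' <;> omega
  have hu_tail : completeQuotient u n₁ = completeQuotient a n₂ := by
    simp only [completeQuotient, u, if_neg (Nat.not_lt.mpr (Nat.le_add_right n₁ _))]
    congr 1 with k
    congr 1
    omega
  have hv_tail : completeQuotient v n₂ = completeQuotient a n₁ := by
    simp only [completeQuotient, v, if_neg (Nat.not_lt.mpr (Nat.le_add_right n₂ _))]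
    congr 1 with k
    congr 1
    omega
  rw [gt_iff_lt, lt_max_iff]
  refine cfVal_lt_or_cfVal_lt_of_completeQuotient_ne ha' hu hv hpar
    (fun k hk => (if_pos hk).symm) (fun k hk => (if_pos hk).symm) hu_tail hv_tail fun heq => ?_
  obtain ⟨A, B, C, hne, hroot⟩ := exists_quadratic_of_completeQuotient_eq ha' h₁₂ heq
  exact hne (by exact_mod_cast hquad A B C (by exact_mod_cast hroot))

/-- Surgery lemma: for `γ = [0; b 1, b 2, ...]` irrational but not a quadratic
irrationality, with partial quotients in `{1,...,4}`, if the blocks of length `2n+2`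
starting at `n₁` and `n₂` coincide (with `n₁ < n₂` of the same parity), then deleting
the block `(b_{n₁}, ..., b_{n₂-1})` or doubling it yields `max(γ¹, γ²) > γ`. -/
theorem stmt14 (n : ℕ) (a : ℕ → ℤ) (h0 : a 0 = 0)
    (ha : ∀ k, 1 ≤ k → 1 ≤ a k ∧ a k ≤ 4)
    (hquad : ∀ qa qb qc : ℚ,
      (qa : ℝ) * (cfVal a) ^ 2 + (qb : ℝ) * cfVal a + (qc : ℝ) = 0 →
        qa = 0 ∧ qb = 0 ∧ qc = 0)
    (n₁ n₂ : ℕ) (h₁ : 1 ≤ n₁) (h₁₂ : n₁ < n₂) (hpar : n₁ % 2 = n₂ % 2)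
    (hrep : ∀ i, i ≤ 2 * n + 1 → a (n₁ + i) = a (n₂ + i)) :
    max (cfVal fun k => if k < n₁ then a k else a (k + (n₂ - n₁)))
        (cfVal fun k => if k < n₂ then a k else a (k - (n₂ - n₁)))
      > cfVal a :=
  stmt14_general a ha hquad n₁ n₂ h₁ h₁₂ hpar
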